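/- Let f_1 : M_1 → M_2 and f_2 : M_2 → M_3 be smooth maps between smooth manifolds and S ⊆ M_3 an embedded submanifold with f_2 transverse to S. Then f_1 is transverse to the submanifold f_2^{-1}(S) ⊆ M_2 if and only if the composite f_2 ∘ f_1 is transverse to S. -/

import Mathlib

open scoped Manifold

/-!
At a point `x` with `f₂ (f₁ x) ∈ S` the statement is linear algebra about `A = (df₁)ₓ`,
`B = (df₂)_{f₁ x}` and `T = T_{f₂ (f₁ x)} S`, by the chain rule `d(f₂ ∘ f₁)ₓ = B ∘ A`.
Pulling back along `B` gives `B⁻¹(range (B ∘ A) + T) = range A + B⁻¹(T)`, and since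
`range B + T` is everything, `range (B ∘ A) + T` is everything iff it contains `range B`,
i.e. iff its preimage `range A + B⁻¹(T)` is everything.
-/

namespace Submodule

variable {R U V W : Type*} [Semiring R] [AddCommGroup U] [Module R U]
  [AddCommGroup V] [Module R V] [AddCommGroup W] [Module R W]

theorem comap_range_comp_sup (f : U →ₗ[R] V) (g : V →ₗ[R] W) (T : Submodule R W) :
    comap g (LinearMap.range (g ∘ₗ f) ⊔ T) = LinearMap.range f ⊔ comap g T := by
  have hmap : map g (LinearMap.range f ⊔ comap g T) ⊔ T = LinearMap.range (g ∘ₗ f) ⊔ T := by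
    rw [map_sup, LinearMap.range_comp, sup_assoc, sup_eq_right.2 (map_comap_le g T)]
  rw [← hmap, comap_map_sup_of_comap_le le_sup_right]

theorem range_sup_comap_eq_top_iff {f : U →ₗ[R] V} {g : V →ₗ[R] W} {T : Submodule R W}
    (h : LinearMap.range g ⊔ T = ⊤) :
    LinearMap.range f ⊔ comap g T = ⊤ ↔ LinearMap.range (g ∘ₗ f) ⊔ T = ⊤ := by
  rw [← comap_range_comp_sup, ← LinearMap.range_le_iff_comap]
  exact ⟨fun hle => eq_top_iff.2 (h ▸ sup_le hle le_sup_right), fun htop => htop ▸ le_top⟩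

end Submodule

theorem transversality_of_composition_general
    {E1 E2 E3 : Type*}
    [NormedAddCommGroup E1] [NormedSpace ℝ E1]
    [NormedAddCommGroup E2] [NormedSpace ℝ E2]
    [NormedAddCommGroup E3] [NormedSpace ℝ E3]
    {H1 H2 H3 : Type*}
    [TopologicalSpace H1] [TopologicalSpace H2] [TopologicalSpace H3]
    (I1 : ModelWithCorners ℝ E1 H1) (I2 : ModelWithCorners ℝ E2 H2)
    (I3 : ModelWithCorners ℝ E3 H3)
    {M1 M2 M3 : Type*}
    [TopologicalSpace M1] [ChartedSpace H1 M1]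
    [TopologicalSpace M2] [ChartedSpace H2 M2]
    [TopologicalSpace M3] [ChartedSpace H3 M3]
    (f1 : M1 → M2) (f2 : M2 → M3)
    (hf1 : MDifferentiable I1 I2 f1) (hf2 : MDifferentiable I2 I3 f2)
    -- the embedded submanifold S of M₃, with its tangent spaces
    (S : Set M3)
    (TS : ∀ y : M3, Submodule ℝ (TangentSpace I3 y))
    -- f₂ is transverse to S
    (hf2S : ∀ y : M2, f2 y ∈ S →
      LinearMap.range ((mfderiv I2 I3 f2 y) :
        TangentSpace I2 y →ₗ[ℝ] TangentSpace I3 (f2 y)) ⊔ TS (f2 y) = ⊤) :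
    -- f₁ ⋔ f₂⁻¹(S)  ↔  (f₂ ∘ f₁) ⋔ S
    ((∀ x : M1, f1 x ∈ f2 ⁻¹' S →
        LinearMap.range ((mfderiv I1 I2 f1 x) :
            TangentSpace I1 x →ₗ[ℝ] TangentSpace I2 (f1 x))
          ⊔ Submodule.comap
              ((mfderiv I2 I3 f2 (f1 x)) :
                TangentSpace I2 (f1 x) →ₗ[ℝ] TangentSpace I3 (f2 (f1 x)))
              (TS (f2 (f1 x))) = ⊤)
      ↔ (∀ x : M1, (f2 ∘ f1) x ∈ S →
          LinearMap.range ((mfderiv I1 I3 (f2 ∘ f1) x) :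
            TangentSpace I1 x →ₗ[ℝ] TangentSpace I3 ((f2 ∘ f1) x)) ⊔ TS ((f2 ∘ f1) x) = ⊤)) := by
  refine forall_congr' fun x => imp_congr_right fun hx => ?_
  rw [mfderiv_comp x (hf2 (f1 x)) (hf1 x)]
  exact Submodule.range_sup_comap_eq_top_iff (hf2S (f1 x) hx)

theorem transversality_of_composition
    {E1 E2 E3 : Type*}
    [NormedAddCommGroup E1] [NormedSpace ℝ E1]
    [NormedAddCommGroup E2] [NormedSpace ℝ E2]
    [NormedAddCommGroup E3] [NormedSpace ℝ E3]
    {H1 H2 H3 : Type*}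
    [TopologicalSpace H1] [TopologicalSpace H2] [TopologicalSpace H3]
    (I1 : ModelWithCorners ℝ E1 H1) (I2 : ModelWithCorners ℝ E2 H2)
    (I3 : ModelWithCorners ℝ E3 H3)
    {M1 M2 M3 : Type*}
    [TopologicalSpace M1] [ChartedSpace H1 M1] [IsManifold I1 (⊤ : ℕ∞) M1]
    [TopologicalSpace M2] [ChartedSpace H2 M2] [IsManifold I2 (⊤ : ℕ∞) M2]
    [TopologicalSpace M3] [ChartedSpace H3 M3] [IsManifold I3 (⊤ : ℕ∞) M3]
    (f1 : M1 → M2) (f2 : M2 → M3)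
    (hf1 : MDifferentiable I1 I2 f1) (hf2 : MDifferentiable I2 I3 f2)
    -- the embedded submanifold S of M₃, with its tangent spaces
    (S : Set M3)
    (TS : ∀ y : M3, Submodule ℝ (TangentSpace I3 y))
    -- f₂ is transverse to S
    (hf2S : ∀ y : M2, f2 y ∈ S →
      LinearMap.range ((mfderiv I2 I3 f2 y) :
        TangentSpace I2 y →ₗ[ℝ] TangentSpace I3 (f2 y)) ⊔ TS (f2 y) = ⊤) :
    -- f₁ ⋔ f₂⁻¹(S)  ↔  (f₂ ∘ f₁) ⋔ S
    ((∀ x : M1, f1 x ∈ f2 ⁻¹' S →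
        LinearMap.range ((mfderiv I1 I2 f1 x) :
            TangentSpace I1 x →ₗ[ℝ] TangentSpace I2 (f1 x))
          ⊔ Submodule.comap
              ((mfderiv I2 I3 f2 (f1 x)) :
                TangentSpace I2 (f1 x) →ₗ[ℝ] TangentSpace I3 (f2 (f1 x)))
              (TS (f2 (f1 x))) = ⊤)
      ↔ (∀ x : M1, (f2 ∘ f1) x ∈ S →
          LinearMap.range ((mfderiv I1 I3 (f2 ∘ f1) x) :
            TangentSpace I1 x →ₗ[ℝ] TangentSpace I3 ((f2 ∘ f1) x)) ⊔ TS ((f2 ∘ f1) x) = ⊤)) :=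
  transversality_of_composition_general I1 I2 I3 f1 f2 hf1 hf2 S TS hf2S
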